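/- arXiv:2505.18676 — 4 statements merged into one kernel-verified Lean document; each statement's English description precedes it below -/
import Mathlib

section
/- Let Z be a nonnegative N×N matrix, σ ∈ ℝ^N strictly positive, pmax > 0, and for j ∈ {1,…,N} define Z_j = Z + (1/pmax)·σ e_jᵀ where e_j is the j-th standard basis vector. Suppose γ > 0 and p ∈ ℝ^N satisfy p > 0, max_n p_n = pmax, and p = γ(Z p + σ). If k is an index attaining p_k = pmax, then Z_k p = (1/γ) p, i.e., (1/γ, p) is an eigenpair of Z_k. -/
open Matrix

/-- With `Z_j = Z + pmax⁻¹ σ e_jᵀ`, if `p > 0` satisfies the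
fixed-point equation `p = γ(Z p + σ)` with `max_n p_n = pmax` attained at `k`,
then `Z_k p = (1/γ) p`, i.e. `(1/γ, p)` is an eigenpair of `Z_k`. -/
theorem stmt_7 {N : ℕ} (Z : Matrix (Fin N) (Fin N) ℝ) (hZ : ∀ i j, 0 ≤ Z i j)
    (σ : Fin N → ℝ) (hσ : ∀ i, 0 < σ i) (pmax : ℝ) (hpmax : 0 < pmax)
    (γ : ℝ) (hγ : 0 < γ) (p : Fin N → ℝ) (hp : ∀ i, 0 < p i)
    (hle : ∀ n, p n ≤ pmax) (k : Fin N) (hk : p k = pmax)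
    (hfix : p = γ • (Z *ᵥ p + σ)) :
    (Z + pmax⁻¹ • vecMulVec σ (Pi.single k 1)) *ᵥ p = γ⁻¹ • p := by
  funext i
  have h1 : (vecMulVec σ (Pi.single k 1)) *ᵥ p = fun i => σ i * p k := by
    funext i
    simp [vecMulVec, mulVec, dotProduct, Finset.sum_eq_single k, Pi.single_apply,
      mul_comm, mul_assoc]
  have h2 := congrFun hfix i
  simp only [Matrix.add_mulVec, Matrix.smul_mulVec, h1, Pi.add_apply, Pi.smul_apply,
    smul_eq_mul] at *
  rw [hk]
  field_simp
  linarith [h2]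
end

section
/- With Z nonnegative, σ > 0, pmax > 0, and Z_j = Z + (1/pmax)σ e_jᵀ: if p > 0 satisfies p = γ(Zp + σ) with max_n p_n = pmax attained at index k, then for every j ∈ {1,…,N}, Z_j p ≤ Z_k p = (1/γ) p componentwise, and consequently ρ(Z_j) ≤ ρ(Z_k) = 1/γ for all j. -/
open Matrix

/-- The spectral radius of a real square matrix: the supremum of the moduli of its
complex eigenvalues. -/
noncomputable def specRad {N : ℕ} (A : Matrix (Fin N) (Fin N) ℝ) : ℝ :=
  sSup {r : ℝ | ∃ μ : ℂ, μ ∈ spectrum ℂ (A.map (fun x : ℝ => (x : ℂ))) ∧ r = ‖μ‖}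

/-!
Writing `Z_j p = Z p + (p_j / pmax) σ`, the bound `p_j ≤ p_k = pmax` shows that every `Z_j p` is
dominated by `Z_k p = Z p + σ = γ⁻¹ p`. For a nonnegative matrix `A` with `A p ≤ λ p` and `p > 0`,
every complex eigenvalue `μ` has `|μ| ≤ λ`: dominate the eigenvector `v` by `c p` with
`c = max_i |v_i| / p_i` and compare both sides of `A v = μ v` at an index attaining `c`.
Hence `ρ(Z_j) ≤ γ⁻¹`, and equality holds for `j = k` because `p` is an eigenvector of `Z_k`.
-/

namespace Matrix

variable {n : Type*}

theorem add_smul_vecMulVec_nonneg {Z : Matrix n n ℝ} (hZ : ∀ i j, 0 ≤ Z i j) {c : ℝ} (hc : 0 ≤ c)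
    {u w : n → ℝ} (hu : 0 ≤ u) (hw : 0 ≤ w) (a b : n) :
    0 ≤ (Z + c • vecMulVec u w) a b := by
  simp only [add_apply, smul_apply, vecMulVec_apply, smul_eq_mul]
  exact add_nonneg (hZ a b) (mul_nonneg hc (mul_nonneg (hu a) (hw b)))

variable [Fintype n] [DecidableEq n]

theorem mem_spectrum_iff_exists_mulVec_eq_smul {K : Type*} [Field K] (A : Matrix n n K) (μ : K) :
    μ ∈ spectrum K A ↔ ∃ v ≠ 0, A *ᵥ v = μ • v := by
  rw [← spectrum_toLin', ← Module.End.hasEigenvalue_iff_mem_spectrum,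
    Module.End.hasEigenvalue_iff, Submodule.ne_bot_iff]
  simp only [Module.End.mem_eigenspace_iff, toLin'_apply]
  exact exists_congr fun v => and_comm

theorem norm_le_of_mem_spectrum_of_mulVec_le {A : Matrix n n ℝ} (hA : ∀ i j, 0 ≤ A i j) {p : n → ℝ}
    (hp : ∀ i, 0 < p i) {r : ℝ} (hAp : ∀ i, (A *ᵥ p) i ≤ r * p i) {μ : ℂ}
    (hμ : μ ∈ spectrum ℂ (A.map (fun x : ℝ => (x : ℂ)))) : ‖μ‖ ≤ r := by
  obtain ⟨v, hv0, hv⟩ := (mem_spectrum_iff_exists_mulVec_eq_smul _ μ).1 hμ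
  obtain ⟨m, hm⟩ := Function.ne_iff.1 hv0
  obtain ⟨i, -, hi⟩ := Finset.univ.exists_max_image (fun j => ‖v j‖ / p j) ⟨m, Finset.mem_univ m⟩
  set c := ‖v i‖ / p i
  have hvc : ∀ j, ‖v j‖ ≤ c * p j := fun j => (div_le_iff₀ (hp j)).1 (hi j (Finset.mem_univ j))
  have hci : ‖v i‖ = c * p i := (div_mul_cancel₀ _ (hp i).ne').symm
  have hc : 0 < c := pos_of_mul_pos_left ((norm_pos_iff.2 hm).trans_le (hvc m)) (hp m).le
  have key : ‖μ‖ * (c * p i) ≤ r * (c * p i) :=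
    calc ‖μ‖ * (c * p i) = ‖∑ j, (A i j : ℂ) * v j‖ := by
          rw [← hci, ← norm_mul, ← smul_eq_mul, ← Pi.smul_apply, ← hv]; rfl
      _ ≤ ∑ j, A i j * ‖v j‖ := by
          refine (norm_sum_le _ _).trans_eq (Finset.sum_congr rfl fun j _ => ?_)
          rw [norm_mul, Complex.norm_real, Real.norm_of_nonneg (hA i j)]
      _ ≤ ∑ j, A i j * (c * p j) := by gcongr with j; exacts [hA i j, hvc j]
      _ = c * (A *ᵥ p) i := by
          simp only [mulVec, dotProduct, Finset.mul_sum]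
          exact Finset.sum_congr rfl fun j _ => by ring
      _ ≤ c * (r * p i) := by gcongr; exact hAp i
      _ = r * (c * p i) := by ring
  exact le_of_mul_le_mul_right key (mul_pos hc (hp i))

theorem ofReal_mem_spectrum_of_mulVec_eq_smul {A : Matrix n n ℝ} {p : n → ℝ} (hp : p ≠ 0)
    {r : ℝ} (hAp : A *ᵥ p = r • p) : (r : ℂ) ∈ spectrum ℂ (A.map (fun x : ℝ => (x : ℂ))) := by
  refine (mem_spectrum_iff_exists_mulVec_eq_smul _ _).2
    ⟨fun i => (p i : ℂ), fun h => hp (funext fun i => by simpa using congrFun h i), ?_⟩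
  ext i
  have := congrFun hAp i
  simp only [mulVec, dotProduct, map_apply, Pi.smul_apply, smul_eq_mul] at this ⊢
  exact_mod_cast this

theorem add_smul_vecMulVec_single_mulVec {R : Type*} [CommSemiring R] (Z : Matrix n n R) (c : R)
    (σ p : n → R) (j : n) :
    (Z + c • vecMulVec σ (Pi.single j 1)) *ᵥ p = Z *ᵥ p + (c * p j) • σ := by
  rw [add_mulVec, smul_mulVec, vecMulVec_mulVec, single_one_dotProduct, op_smul_eq_smul, smul_smul]

end Matrix

section SpectralRadius

variable {N : ℕ} {A : Matrix (Fin N) (Fin N) ℝ} {p : Fin N → ℝ} {r : ℝ}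

theorem specRad_le_of_mulVec_le (hA : ∀ i j, 0 ≤ A i j) (hp : ∀ i, 0 < p i) (hr : 0 ≤ r)
    (hAp : ∀ i, (A *ᵥ p) i ≤ r * p i) : specRad A ≤ r :=
  Real.sSup_le (by rintro _ ⟨μ, hμ, rfl⟩; exact norm_le_of_mem_spectrum_of_mulVec_le hA hp hAp hμ) hr

theorem specRad_eq_of_mulVec_eq [NeZero N] (hA : ∀ i j, 0 ≤ A i j) (hp : ∀ i, 0 < p i)
    (hr : 0 ≤ r) (hAp : A *ᵥ p = r • p) : specRad A = r := by
  have hle : ∀ i, (A *ᵥ p) i ≤ r * p i := fun i => (congrFun hAp i).le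
  refine le_antisymm (specRad_le_of_mulVec_le hA hp hr hle) (le_csSup ?_ ?_)
  · exact ⟨r, by rintro _ ⟨μ, hμ, rfl⟩; exact norm_le_of_mem_spectrum_of_mulVec_le hA hp hle hμ⟩
  · refine ⟨r, ofReal_mem_spectrum_of_mulVec_eq_smul (fun h => (hp 0).ne' ?_) hAp, ?_⟩
    · simpa using congrFun h 0
    · rw [Complex.norm_real, Real.norm_of_nonneg hr]

end SpectralRadius

theorem stmt_8_general {N : ℕ} (Z : Matrix (Fin N) (Fin N) ℝ) (hZ : ∀ i j, 0 ≤ Z i j)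
    (σ : Fin N → ℝ) (hσ : ∀ i, 0 < σ i) (pmax : ℝ)
    (γ : ℝ) (hγ : 0 < γ) (p : Fin N → ℝ) (hp : ∀ i, 0 < p i)
    (hle : ∀ n, p n ≤ pmax) (k : Fin N) (hk : p k = pmax)
    (hfix : p = γ • (Z *ᵥ p + σ)) :
    (∀ j i, ((Z + pmax⁻¹ • vecMulVec σ (Pi.single j 1)) *ᵥ p) i ≤
      ((Z + pmax⁻¹ • vecMulVec σ (Pi.single k 1)) *ᵥ p) i) ∧
    (Z + pmax⁻¹ • vecMulVec σ (Pi.single k 1)) *ᵥ p = γ⁻¹ • p ∧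
    (∀ j, specRad (Z + pmax⁻¹ • vecMulVec σ (Pi.single j 1)) ≤
      specRad (Z + pmax⁻¹ • vecMulVec σ (Pi.single k 1))) ∧
    specRad (Z + pmax⁻¹ • vecMulVec σ (Pi.single k 1)) = 1 / γ := by
  have hpmax : 0 < pmax := hk ▸ hp k
  have hγinv : 0 ≤ γ⁻¹ := inv_nonneg.2 hγ.le
  have hZk : (Z + pmax⁻¹ • vecMulVec σ (Pi.single k 1)) *ᵥ p = γ⁻¹ • p := by
    rw [add_smul_vecMulVec_single_mulVec, hk, inv_mul_cancel₀ hpmax.ne', one_smul,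
      eq_inv_smul_iff₀ hγ.ne', ← hfix]
  have hmono : ∀ j i, ((Z + pmax⁻¹ • vecMulVec σ (Pi.single j 1)) *ᵥ p) i ≤
      ((Z + pmax⁻¹ • vecMulVec σ (Pi.single k 1)) *ᵥ p) i := by
    intro j i
    simp only [add_smul_vecMulVec_single_mulVec, Pi.add_apply, Pi.smul_apply, smul_eq_mul, hk]
    gcongr
    exacts [(hσ i).le, hle j]
  have hnonneg (j : Fin N) :=
    add_smul_vecMulVec_nonneg hZ (inv_nonneg.2 hpmax.le) (fun i => (hσ i).le)
      (Pi.single_nonneg.2 zero_le_one : 0 ≤ Pi.single j (1 : ℝ))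
  have : NeZero N := ⟨k.pos.ne'⟩
  have hρk := specRad_eq_of_mulVec_eq (hnonneg k) hp hγinv hZk
  refine ⟨hmono, hZk, fun j => hρk ▸ specRad_le_of_mulVec_le (hnonneg j) hp hγinv fun i => ?_,
    hρk.trans (one_div γ).symm⟩
  simpa [hZk] using hmono j i

/-- With `Z_j = Z + pmax⁻¹ σ e_jᵀ` and `p > 0` satisfying
`p = γ(Z p + σ)` with maximum `pmax` attained at `k`, one has
`Z_j p ≤ Z_k p = (1/γ) p` componentwise for all `j`, and hence
`ρ(Z_j) ≤ ρ(Z_k) = 1/γ`. -/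
theorem stmt_8 {N : ℕ} (Z : Matrix (Fin N) (Fin N) ℝ) (hZ : ∀ i j, 0 ≤ Z i j)
    (σ : Fin N → ℝ) (hσ : ∀ i, 0 < σ i) (pmax : ℝ) (hpmax : 0 < pmax)
    (γ : ℝ) (hγ : 0 < γ) (p : Fin N → ℝ) (hp : ∀ i, 0 < p i)
    (hle : ∀ n, p n ≤ pmax) (k : Fin N) (hk : p k = pmax)
    (hfix : p = γ • (Z *ᵥ p + σ)) :
    (∀ j i, ((Z + pmax⁻¹ • vecMulVec σ (Pi.single j 1)) *ᵥ p) i ≤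
      ((Z + pmax⁻¹ • vecMulVec σ (Pi.single k 1)) *ᵥ p) i) ∧
    (Z + pmax⁻¹ • vecMulVec σ (Pi.single k 1)) *ᵥ p = γ⁻¹ • p ∧
    (∀ j, specRad (Z + pmax⁻¹ • vecMulVec σ (Pi.single j 1)) ≤
      specRad (Z + pmax⁻¹ • vecMulVec σ (Pi.single k 1))) ∧
    specRad (Z + pmax⁻¹ • vecMulVec σ (Pi.single k 1)) = 1 / γ :=
  stmt_8_general Z hZ σ hσ pmax γ hγ p hp hle k hk hfix
end

section
/- Let T : ℝ^N_{≥0} → ℝ^N_{>0} be a continuous, concave, componentwise positive map that is monotone (p ≤ q implies T(p) ≤ T(q)). If p* > 0 and q* > 0 both satisfy the normalized fixed-point equation x = (pmax / max_n T_n(x)) · T(x) with max_n x_n = pmax, and both arise as solutions of T(x) = λx with the normalization max_n x_n = pmax for some λ > 0, then (λ, x) is unique: the conditional eigenvalue problem T(x) = λx, x > 0, max_n x_n = pmax has at most one solution when T is a standard interference mapping. -/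
/-- If `x ≤ α y` with equality at some index and `α > 1`, then `lam₁ < lam₂`. -/
lemma stmt_10_aux {N : ℕ} (T : (Fin N → ℝ) → (Fin N → ℝ))
    (hmono : ∀ p q : Fin N → ℝ, (∀ i, 0 ≤ p i) → (∀ i, p i ≤ q i) → ∀ n, T p n ≤ T q n)
    (hscal : ∀ p : Fin N → ℝ, (∀ i, 0 ≤ p i) → ∀ α : ℝ, 1 < α → ∀ n, T (α • p) n < α * T p n)
    (lam₁ lam₂ : ℝ) (x y : Fin N → ℝ)
    (hx : ∀ i, 0 < x i) (hy : ∀ i, 0 < y i)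
    (hxeig : T x = lam₁ • x) (hyeig : T y = lam₂ • y)
    (α : ℝ) (hα : 1 < α) (hle : ∀ n, x n ≤ α * y n) (k : Fin N) (hk : x k = α * y k) :
    lam₁ < lam₂ := by
  have hxnn : ∀ i, 0 ≤ x i := fun i => (hx i).le
  have hynn : ∀ i, 0 ≤ y i := fun i => (hy i).le
  have h1 : T x k ≤ T (α • y) k :=
    hmono x (α • y) hxnn (fun i => by simpa using hle i) k
  have h2 : T (α • y) k < α * T y k := hscal y hynn α hα k
  have h3 : lam₁ * x k < α * (lam₂ * y k) := by
    have := h1.trans_lt h2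
    rw [hxeig, hyeig] at this
    simpa [Pi.smul_apply, smul_eq_mul] using this
  rw [hk] at h3
  have hyk := hy k
  have hαpos : (0:ℝ) < α := lt_trans one_pos hα
  nlinarith [mul_pos hαpos hyk]

lemma stmt_10_le {N : ℕ} (T : (Fin N → ℝ) → (Fin N → ℝ))
    (hpos : ∀ p : Fin N → ℝ, (∀ i, 0 ≤ p i) → ∀ n, 0 < T p n)
    (hmono : ∀ p q : Fin N → ℝ, (∀ i, 0 ≤ p i) → (∀ i, p i ≤ q i) → ∀ n, T p n ≤ T q n)
    (hscal : ∀ p : Fin N → ℝ, (∀ i, 0 ≤ p i) → ∀ α : ℝ, 1 < α → ∀ n, T (α • p) n < α * T p n)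
    (pmax : ℝ) (hpmax : 0 < pmax)
    (lam₁ lam₂ : ℝ) (x y : Fin N → ℝ)
    (hx : ∀ i, 0 < x i) (hxle : ∀ n, x n ≤ pmax)
    (hxmax : ∃ n, x n = pmax) (hxeig : T x = lam₁ • x)
    (hy : ∀ i, 0 < y i) (hyle : ∀ n, y n ≤ pmax)
    (hyeig : T y = lam₂ • y) :
    lam₁ ≤ lam₂ := by
  obtain ⟨m, hm⟩ := hxmax
  have : Nonempty (Fin N) := ⟨m⟩
  set α : ℝ := Finset.univ.sup' Finset.univ_nonempty (fun i => x i / y i) with hαdef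
  obtain ⟨k, -, hk⟩ := Finset.exists_mem_eq_sup' Finset.univ_nonempty (fun i => x i / y i)
  have hle : ∀ n, x n ≤ α * y n := by
    intro n
    have h := Finset.le_sup' (fun i => x i / y i) (Finset.mem_univ n)
    rw [div_le_iff₀ (hy n)] at h
    linarith [h]
  have hαk : x k = α * y k := by
    rw [hαdef, hk, div_mul_cancel₀ _ (hy k).ne']
  have hα1 : 1 ≤ α := by
    have h := Finset.le_sup' (fun i => x i / y i) (Finset.mem_univ m)
    have : (1 : ℝ) ≤ x m / y m := by
      rw [le_div_iff₀ (hy m)]; rw [hm]; linarith [hyle m]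
    linarith [h, this]
  rcases lt_or_eq_of_le hα1 with hα | hα
  · exact (stmt_10_aux T hmono hscal lam₁ lam₂ x y hx hy hxeig hyeig α hα hle k hαk).le
  · -- α = 1, so x ≤ y
    have hxy : ∀ n, x n ≤ y n := fun n => by have := hle n; rw [← hα] at this; linarith
    have h1 : T x m ≤ T y m := hmono x y (fun i => (hx i).le) hxy m
    rw [hxeig, hyeig] at h1
    simp only [Pi.smul_apply, smul_eq_mul] at h1
    have hlam₂ : 0 < lam₂ := by
      have := hpos y (fun i => (hy i).le) m
      rw [hyeig] at this
      simp only [Pi.smul_apply, smul_eq_mul] at this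
      nlinarith [hy m]
    have h2 : lam₂ * y m ≤ lam₂ * pmax :=
      mul_le_mul_of_nonneg_left (hyle m) hlam₂.le
    rw [hm] at h1
    have hyn := hy m
    nlinarith [hyle m]

/-- For a standard interference mapping `T` (positive, monotone,
scalable), the conditional eigenvalue problem `T(x) = λ x`, `x > 0`,
`max_n x_n = pmax` has at most one solution `(λ, x)`. -/
theorem stmt_10 {N : ℕ} (T : (Fin N → ℝ) → (Fin N → ℝ))
    (hpos : ∀ p : Fin N → ℝ, (∀ i, 0 ≤ p i) → ∀ n, 0 < T p n)
    (hmono : ∀ p q : Fin N → ℝ, (∀ i, 0 ≤ p i) → (∀ i, p i ≤ q i) → ∀ n, T p n ≤ T q n)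
    (hscal : ∀ p : Fin N → ℝ, (∀ i, 0 ≤ p i) → ∀ α : ℝ, 1 < α → ∀ n, T (α • p) n < α * T p n)
    (pmax : ℝ) (hpmax : 0 < pmax)
    (lam₁ lam₂ : ℝ) (x y : Fin N → ℝ)
    (hlam₁ : 0 < lam₁) (hx : ∀ i, 0 < x i) (hxle : ∀ n, x n ≤ pmax)
    (hxmax : ∃ n, x n = pmax) (hxeig : T x = lam₁ • x)
    (hlam₂ : 0 < lam₂) (hy : ∀ i, 0 < y i) (hyle : ∀ n, y n ≤ pmax)
    (hymax : ∃ n, y n = pmax) (hyeig : T y = lam₂ • y) :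
    lam₁ = lam₂ ∧ x = y := by
  have h12 : lam₁ ≤ lam₂ :=
    stmt_10_le T hpos hmono hscal pmax hpmax lam₁ lam₂ x y hx hxle hxmax hxeig hy hyle hyeig
  have h21 : lam₂ ≤ lam₁ :=
    stmt_10_le T hpos hmono hscal pmax hpmax lam₂ lam₁ y x hy hyle hymax hyeig hx hxle hxeig
  have hlam : lam₁ = lam₂ := le_antisymm h12 h21
  refine ⟨hlam, ?_⟩
  -- now show x = y using that α > 1 would give lam₁ < lam₂
  obtain ⟨m, hm⟩ := hxmax
  have hN : Nonempty (Fin N) := ⟨m⟩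
  have key : ∀ (u v : Fin N → ℝ) (μ ν : ℝ), (∀ i, 0 < u i) → (∀ i, 0 < v i) →
      T u = μ • u → T v = ν • v → μ = ν → ∀ n, u n ≤ v n := by
    intro u v μ ν hu hv hue hve hμν
    set β : ℝ := Finset.univ.sup' Finset.univ_nonempty (fun i => u i / v i) with hβdef
    obtain ⟨k, -, hk⟩ := Finset.exists_mem_eq_sup' Finset.univ_nonempty (fun i => u i / v i)
    have hle : ∀ n, u n ≤ β * v n := by
      intro n
      have h := Finset.le_sup' (fun i => u i / v i) (Finset.mem_univ n)
      rw [div_le_iff₀ (hv n)] at h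
      linarith [h]
    have hβk : u k = β * v k := by rw [hβdef, hk, div_mul_cancel₀ _ (hv k).ne']
    by_contra hc
    push_neg at hc
    obtain ⟨n, hn⟩ := hc
    have hβ : 1 < β := by
      have h := Finset.le_sup' (fun i => u i / v i) (Finset.mem_univ n)
      have : (1 : ℝ) < u n / v n := by rw [lt_div_iff₀ (hv n)]; linarith
      linarith [h, this]
    exact absurd hμν (stmt_10_aux T hmono hscal μ ν u v hu hv hue hve β hβ hle k hβk).ne
  funext n
  exact le_antisymm (key x y lam₁ lam₂ hx hy hxeig hyeig hlam n)
    (key y x lam₂ lam₁ hy hx hyeig hxeig hlam.symm n)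
end

section
/- For the affine-min interference mapping T(p)_n = min_{d ∈ D_n}(⟨z_{n,d}, p⟩ + σ_{n,d}) with z_{n,d} ≥ 0 having zero n-th coordinate and σ_{n,d} > 0, the conditional eigenvalue problem T(p) = λ p, p > 0, max_n p_n = pmax has a solution: there exist λ > 0 and p > 0 with max_n p_n = pmax satisfying T(p) = λp. -/
/-!
For `l > 0` the capped map `p ↦ min (T p / l) pmax` is monotone on the box `[0, pmax]^ι`, so it
has a fixed point `P l` by Knaster–Tarski. Scalability (`T (c • p) < c • T p` for `c > 1`) puts
every subsolution below every supersolution, so `P l` is unique, and uniqueness together with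
compactness of the box makes `l ↦ P l` continuous. The continuous function
`l ↦ maxᵢ T (P l) i / l` is at least `pmax` for small `l` and at most `pmax` for large `l`; where
it equals `pmax` the cap is inactive, so `T (P l) = l • P l`, and a maximising coordinate of
`P l` equals `pmax`.
-/

open Matrix

open Set Filter Topology Function

theorem exists_isFixedPt_of_mapsTo_Icc {α : Type*} [ConditionallyCompleteLattice α] {a b : α}
    (hab : a ≤ b) {f : α → α} (hf : MonotoneOn f (Icc a b)) (hmaps : MapsTo f (Icc a b) (Icc a b)) :
    ∃ x ∈ Icc a b, IsFixedPt f x := by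
  have : Fact (a ≤ b) := ⟨hab⟩
  let g : Icc a b →o Icc a b := ⟨hmaps.restrict f _ _, fun x y hxy => hf x.2 y.2 hxy⟩
  exact ⟨g.gfp, g.gfp.2, congrArg Subtype.val g.map_gfp⟩

variable {ι : Type*}

/-- Yates' standard interference functions, restricted to the nonnegative orthant. -/
structure IsStandardInterference (T : (ι → ℝ) → ι → ℝ) : Prop where
  pos : ∀ ⦃p⦄, 0 ≤ p → ∀ i, 0 < T p i
  mono : ∀ ⦃p q⦄, 0 ≤ p → p ≤ q → T p ≤ T q
  scalable : ∀ ⦃p⦄, 0 ≤ p → ∀ ⦃c : ℝ⦄, 1 < c → ∀ i, T (c • p) i < c * T p i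

noncomputable def cappedMap (T : (ι → ℝ) → ι → ℝ) (pmax l : ℝ) (p : ι → ℝ) : ι → ℝ :=
  fun i => min (T p i / l) pmax

namespace IsStandardInterference

variable {T : (ι → ℝ) → ι → ℝ} {pmax l : ℝ}

theorem le_of_le_cappedMap_of_cappedMap_le [Finite ι] (hT : IsStandardInterference T)
    (hpmax : 0 < pmax) (hl : 0 < l) {p q : ι → ℝ} (hp0 : 0 ≤ p) (hq0 : 0 ≤ q)
    (hp : p ≤ cappedMap T pmax l p) (hq : cappedMap T pmax l q ≤ q) : p ≤ q := by
  by_contra hpq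
  obtain ⟨i₀, hi₀⟩ := not_forall.1 hpq
  have hqpos : ∀ i, 0 < q i := fun i =>
    (lt_min (div_pos (hT.pos hq0 i) hl) hpmax).trans_le (hq i)
  have : Nonempty ι := ⟨i₀⟩
  obtain ⟨n, hn⟩ := Finite.exists_max fun i => p i / q i
  set c := p n / q n
  have hc : 1 < c := ((one_lt_div (hqpos i₀)).2 (not_le.1 hi₀)).trans_le (hn i₀)
  have hpc : p ≤ c • q := fun i => (div_le_iff₀ (hqpos i)).1 (hn i)
  have hpn : p n = c * q n := (div_mul_cancel₀ _ (hqpos n).ne').symm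
  have hqn : q n < pmax := calc
    q n < c * q n := lt_mul_of_one_lt_left (hqpos n) hc
    _ = p n := hpn.symm
    _ ≤ pmax := (hp n).trans (min_le_right _ _)
  -- below the cap, the supersolution inequality is the uncapped one
  have hTq : T q n / l ≤ q n := (min_le_iff.1 (hq n)).resolve_right hqn.not_ge
  have := calc
    p n ≤ T p n / l := (hp n).trans (min_le_left _ _)
    _ ≤ T (c • q) n / l := by gcongr; exact hT.mono hp0 hpc n
    _ < c * T q n / l := by gcongr; exact hT.scalable hq0 hc n
    _ = c * (T q n / l) := mul_div_assoc _ _ _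
    _ ≤ c * q n := by gcongr
    _ = p n := hpn.symm
  exact lt_irrefl _ this

theorem eq_of_isFixedPt_cappedMap [Finite ι] (hT : IsStandardInterference T) (hpmax : 0 < pmax)
    (hl : 0 < l) {p q : ι → ℝ} (hp0 : 0 ≤ p) (hq0 : 0 ≤ q)
    (hp : IsFixedPt (cappedMap T pmax l) p) (hq : IsFixedPt (cappedMap T pmax l) q) : p = q :=
  le_antisymm (hT.le_of_le_cappedMap_of_cappedMap_le hpmax hl hp0 hq0 hp.ge hq.le)
    (hT.le_of_le_cappedMap_of_cappedMap_le hpmax hl hq0 hp0 hq.ge hp.le)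

theorem exists_isFixedPt_cappedMap (hT : IsStandardInterference T) (hpmax : 0 ≤ pmax)
    (hl : 0 < l) :
    ∃ p ∈ Icc 0 (fun _ => pmax), IsFixedPt (cappedMap T pmax l) p := by
  refine exists_isFixedPt_of_mapsTo_Icc (fun _ => hpmax) ?_ ?_
  · exact fun p hp q _ hpq i =>
      min_le_min_right _ (div_le_div_of_nonneg_right (hT.mono hp.1 hpq i) hl.le)
  · exact fun p hp => ⟨fun i => le_min (div_pos (hT.pos hp.1 i) hl).le hpmax,
      fun i => min_le_right _ _⟩

theorem continuousAt_of_isFixedPt_cappedMap [Finite ι] (hT : IsStandardInterference T)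
    (hTc : Continuous T) (hpmax : 0 < pmax)
    {P : ℝ → ι → ℝ} (hPmem : ∀ l, P l ∈ Icc 0 (fun _ => pmax))
    (hPfix : ∀ l, 0 < l → IsFixedPt (cappedMap T pmax l) (P l)) (hl : 0 < l) :
    ContinuousAt P l := by
  refine tendsto_of_subseq_tendsto fun u hu => ?_
  obtain ⟨x, hx, φ, hφmono, hφ⟩ := isCompact_Icc.tendsto_subseq fun k => hPmem (u k)
  have huφ : Tendsto (u ∘ φ) atTop (𝓝 l) := hu.comp hφmono.tendsto_atTop
  -- every limit point of `P` at `l` is a fixed point of the limiting map, hence is `P l`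
  have hfix : IsFixedPt (cappedMap T pmax l) x := by
    have hlim : Tendsto (fun k => cappedMap T pmax (u (φ k)) (P (u (φ k)))) atTop
        (𝓝 (cappedMap T pmax l x)) :=
      tendsto_pi_nhds.2 fun i =>
        (((continuous_apply i).tendsto _).comp ((hTc.tendsto x).comp hφ) |>.div huφ hl.ne').min
          tendsto_const_nhds
    refine tendsto_nhds_unique (hlim.congr' ?_) hφ
    filter_upwards [huφ.eventually (lt_mem_nhds hl)] with k hk using hPfix _ hk
  refine ⟨φ, ?_⟩
  rwa [← hT.eq_of_isFixedPt_cappedMap hpmax hl hx.1 (hPmem l).1 hfix (hPfix l hl)]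

theorem exists_max_div_eq_cap [Fintype ι] [Nonempty ι] (hT : IsStandardInterference T)
    (hTc : Continuous T) (hpmax : 0 < pmax) {P : ℝ → ι → ℝ}
    (hPmem : ∀ l, P l ∈ Icc 0 (fun _ => pmax)) (hPcont : ∀ l, 0 < l → ContinuousAt P l) :
    ∃ lam, 0 < lam ∧ (∀ i, T (P lam) i / lam ≤ pmax) ∧ ∃ i, T (P lam) i / lam = pmax := by
  obtain ⟨i₀⟩ := ‹Nonempty ι›
  let ψ : ℝ → ℝ := fun l => Finset.univ.sup' Finset.univ_nonempty fun i => T (P l) i / l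
  let M := Finset.univ.sup' Finset.univ_nonempty (T fun _ => pmax)
  set a := T 0 i₀ / pmax
  set b := max a (M / pmax)
  have ha : 0 < a := div_pos (hT.pos le_rfl i₀) hpmax
  have hb : 0 < b := ha.trans_le (le_max_left _ _)
  have hψa : pmax ≤ ψ a := calc
    pmax = T 0 i₀ / a := by rw [div_div_cancel₀ (hT.pos le_rfl i₀).ne']
    _ ≤ T (P a) i₀ / a := by gcongr; exact hT.mono le_rfl (hPmem a).1 i₀
    _ ≤ ψ a := Finset.le_sup' (fun i => T (P a) i / a) (Finset.mem_univ i₀)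
  have hψb : ψ b ≤ pmax := Finset.sup'_le _ _ fun i _ => calc
    T (P b) i / b ≤ M / b := by
      gcongr
      exact (hT.mono (hPmem b).1 (hPmem b).2 i).trans (Finset.le_sup' _ (Finset.mem_univ i))
    _ ≤ pmax := (div_le_iff₀' hb).2 ((div_le_iff₀ hpmax).1 (le_max_right _ _))
  have hψ : ContinuousOn ψ (Icc a b) := fun l hl =>
    (ContinuousAt.finset_sup'_apply _ fun i _ =>
      ((continuous_apply i).continuousAt.comp (hTc.continuousAt.comp
        (hPcont l (ha.trans_le hl.1)))).div continuousAt_id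
          (ha.trans_le hl.1).ne').continuousWithinAt
  obtain ⟨lam, hlam, hψlam⟩ := intermediate_value_Icc' (le_max_left _ _) hψ ⟨hψb, hψa⟩
  refine ⟨lam, ha.trans_le hlam.1, fun i => hψlam ▸
    Finset.le_sup' (fun i => T (P lam) i / lam) (Finset.mem_univ i), ?_⟩
  obtain ⟨i, -, hi⟩ := Finset.exists_mem_eq_sup' Finset.univ_nonempty fun i => T (P lam) i / lam
  exact ⟨i, hi ▸ hψlam⟩

theorem exists_conditional_eigenpair [Fintype ι] [Nonempty ι] (hT : IsStandardInterference T)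
    (hTc : Continuous T) (hpmax : 0 < pmax) :
    ∃ lam : ℝ, 0 < lam ∧ ∃ p : ι → ℝ,
      (∀ i, 0 < p i) ∧ (∀ i, p i ≤ pmax) ∧ (∃ i, p i = pmax) ∧ T p = lam • p := by
  have hfix : ∀ l, ∃ p ∈ Icc 0 (fun _ => pmax), 0 < l → IsFixedPt (cappedMap T pmax l) p := by
    -- `P l` matters only for `l > 0`; elsewhere any point of the box will do
    intro l
    by_cases hl : 0 < l
    · obtain ⟨p, hp, hpfix⟩ := hT.exists_isFixedPt_cappedMap hpmax.le hl
      exact ⟨p, hp, fun _ => hpfix⟩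
    · exact ⟨0, ⟨le_rfl, fun _ => hpmax.le⟩, fun h => absurd h hl⟩
  choose P hPmem hPfix using hfix
  obtain ⟨lam, hlam, hle, i, hi⟩ := hT.exists_max_div_eq_cap hTc hpmax hPmem fun l hl =>
    hT.continuousAt_of_isFixedPt_cappedMap hTc hpmax hPmem hPfix hl
  have hP : ∀ i, P lam i = T (P lam) i / lam := fun i =>
    (congrFun (hPfix lam hlam) i).symm.trans (min_eq_left (hle i))
  refine ⟨lam, hlam, P lam, fun i => ?_, fun i => (hPmem lam).2 i, ⟨i, (hP i).trans hi⟩,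
    funext fun i => ?_⟩
  · exact (hP i).symm ▸ div_pos (hT.pos (hPmem lam).1 i) hlam
  · rw [Pi.smul_apply, smul_eq_mul, hP i, mul_div_cancel₀ _ hlam.ne']

end IsStandardInterference

noncomputable def affineMinMap {ι : Type*} [Fintype ι] {D : ι → Type*} [∀ n, Fintype (D n)]
    [∀ n, Nonempty (D n)] (z : ∀ n, D n → ι → ℝ) (σ : ∀ n, D n → ℝ) (p : ι → ℝ) : ι → ℝ :=
  fun n => Finset.univ.inf' Finset.univ_nonempty fun d => z n d ⬝ᵥ p + σ n d

section AffineMin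

variable {ι : Type*} [Fintype ι] {D : ι → Type*} [∀ n, Fintype (D n)] [∀ n, Nonempty (D n)]
  {z : ∀ n, D n → ι → ℝ} {σ : ∀ n, D n → ℝ}

theorem continuous_affineMinMap : Continuous (affineMinMap z σ) :=
  continuous_pi fun _ => Continuous.finset_inf'_apply _ fun _ _ =>
    (continuous_const.dotProduct continuous_id).add continuous_const

theorem isStandardInterference_affineMinMap (hz : ∀ n d, 0 ≤ z n d) (hσ : ∀ n d, 0 < σ n d) :
    IsStandardInterference (affineMinMap z σ) where
  pos p hp n := (Finset.lt_inf'_iff _).2 fun d _ =>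
    add_pos_of_nonneg_of_pos (dotProduct_nonneg_of_nonneg (hz n d) hp) (hσ n d)
  mono p q _ hpq n := Finset.inf'_mono_fun fun d _ =>
    add_le_add_left (dotProduct_le_dotProduct_of_nonneg_left hpq (hz n d)) _
  scalable p _ c hc n := by
    obtain ⟨d, -, hd⟩ := Finset.exists_mem_eq_inf' Finset.univ_nonempty
      fun d => z n d ⬝ᵥ p + σ n d
    calc affineMinMap z σ (c • p) n ≤ z n d ⬝ᵥ (c • p) + σ n d :=
          Finset.inf'_le _ (Finset.mem_univ d)
      _ < c * (z n d ⬝ᵥ p + σ n d) := by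
        rw [dotProduct_smul, smul_eq_mul, mul_add]
        gcongr
        exact lt_mul_of_one_lt_left (hσ n d) hc
      _ = c * affineMinMap z σ p n := by rw [affineMinMap, hd]

end AffineMin

theorem stmt_11_general {N : ℕ} (hN : 1 ≤ N) (pmax : ℝ) (hpmax : 0 < pmax)
    (D : Fin N → Type) [∀ n, Fintype (D n)] [∀ n, Nonempty (D n)]
    (z : ∀ n, D n → (Fin N → ℝ)) (σ : ∀ n, D n → ℝ)
    (hz : ∀ n d i, 0 ≤ z n d i)
    (hσ : ∀ n d, 0 < σ n d) :
    ∃ lam : ℝ, 0 < lam ∧ ∃ p : Fin N → ℝ,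
      (∀ i, 0 < p i) ∧ (∀ i, p i ≤ pmax) ∧ (∃ i, p i = pmax) ∧
      ∀ n : Fin N,
        Finset.univ.inf' Finset.univ_nonempty (fun d : D n => z n d ⬝ᵥ p + σ n d) =
          lam * p n := by
  have : Nonempty (Fin N) := ⟨⟨0, hN⟩⟩
  obtain ⟨lam, hlam, p, hpos, hle, hmax, heig⟩ :=
    (isStandardInterference_affineMinMap hz hσ).exists_conditional_eigenpair
      continuous_affineMinMap hpmax
  exact ⟨lam, hlam, p, hpos, hle, hmax, fun n => congrFun heig n⟩

/-- For the affine-min interference mapping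
`T(p)_n = min_{d ∈ D_n} (⟨z_{n,d}, p⟩ + σ_{n,d})` with `z_{n,d} ≥ 0` having zero
`n`-th coordinate and `σ_{n,d} > 0`, the conditional eigenvalue problem
`T(p) = λ p`, `p > 0`, `max_n p_n = pmax` has a solution. -/
theorem stmt_11 {N : ℕ} (hN : 1 ≤ N) (pmax : ℝ) (hpmax : 0 < pmax)
    (D : Fin N → Type) [∀ n, Fintype (D n)] [∀ n, Nonempty (D n)]
    (z : ∀ n, D n → (Fin N → ℝ)) (σ : ∀ n, D n → ℝ)
    (hz : ∀ n d i, 0 ≤ z n d i) (hzn : ∀ n d, z n d n = 0)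
    (hσ : ∀ n d, 0 < σ n d) :
    ∃ lam : ℝ, 0 < lam ∧ ∃ p : Fin N → ℝ,
      (∀ i, 0 < p i) ∧ (∀ i, p i ≤ pmax) ∧ (∃ i, p i = pmax) ∧
      ∀ n : Fin N,
        Finset.univ.inf' Finset.univ_nonempty (fun d : D n => z n d ⬝ᵥ p + σ n d) =
          lam * p n :=
  stmt_11_general hN pmax hpmax D z σ hz hσ
end
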